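/- Let u : ℝ → ℝ be infinitely differentiable with u(x) > 0 at a point x ∈ ℝ, let f(v) = v²/2 be the Burgers flux, take κ = 1/3, and assume u′(x)·u″(x) ≠ 0. Then Res(h)/h² converges to (1/12)·u′(x)u″(x) ≠ 0 as h → 0⁺; in particular Res(h) is not o(h²), so the UMUSCL scheme is at most second-order accurate at x for the nonlinear Burgers equation. -/

import Mathlib

open Filter Topology Asymptotics
open scoped ContDiff

/-- Van Leer κ-reconstructed left state at the face `x + h/2`. -/
noncomputable def uLp (κ : ℝ) (u : ℝ → ℝ) (x h : ℝ) : ℝ :=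
  κ * (u x + u (x + h)) / 2 + (1 - κ) * (u x + (u (x + h) - u (x - h)) / 4)

/-- Van Leer κ-reconstructed right state at the face `x + h/2`. -/
noncomputable def uRp (κ : ℝ) (u : ℝ → ℝ) (x h : ℝ) : ℝ :=
  κ * (u (x + h) + u x) / 2 + (1 - κ) * (u (x + h) - (u (x + 2 * h) - u x) / 4)

/-- Van Leer κ-reconstructed left state at the face `x − h/2`. -/
noncomputable def uLm (κ : ℝ) (u : ℝ → ℝ) (x h : ℝ) : ℝ :=
  κ * (u (x - h) + u x) / 2 + (1 - κ) * (u (x - h) + (u x - u (x - 2 * h)) / 4)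

/-- Van Leer κ-reconstructed right state at the face `x − h/2`. -/
noncomputable def uRm (κ : ℝ) (u : ℝ → ℝ) (x h : ℝ) : ℝ :=
  κ * (u x + u (x - h)) / 2 + (1 - κ) * (u x - (u (x + h) - u (x - h)) / 4)

/-- The UMUSCL numerical flux `F(a,b) = (f(a)+f(b))/2 − (|f′((a+b)/2)|/2)(b−a)`. -/
noncomputable def numFlux (f : ℝ → ℝ) (a b : ℝ) : ℝ :=
  (f a + f b) / 2 - (|deriv f ((a + b) / 2)| / 2) * (b - a)

/-- The UMUSCL residual at `x` for the steady conservation law `∂ₓ f(u) = s`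
with forcing `s(y) = d/dy f(u(y))`. -/
noncomputable def umusclRes (f : ℝ → ℝ) (κ : ℝ) (u : ℝ → ℝ) (x h : ℝ) : ℝ :=
  (numFlux f (uLp κ u x h) (uRp κ u x h) - numFlux f (uLm κ u x h) (uRm κ u x h)) / h
    - deriv f (u x) * deriv u x

noncomputable def auxP (u : ℝ → ℝ) (x t : ℝ) : ℝ := 5/6 * u x + 1/3 * u (x + t) - 1/6 * u (x - t)
noncomputable def auxP1 (u : ℝ → ℝ) (x t : ℝ) : ℝ := 1/3 * deriv u (x + t) + 1/6 * deriv u (x - t)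
noncomputable def auxP2 (u : ℝ → ℝ) (x t : ℝ) : ℝ :=
  1/3 * deriv (deriv u) (x + t) - 1/6 * deriv (deriv u) (x - t)
noncomputable def auxP3 (u : ℝ → ℝ) (x t : ℝ) : ℝ :=
  1/3 * deriv (deriv (deriv u)) (x + t) + 1/6 * deriv (deriv (deriv u)) (x - t)
noncomputable def auxM (u : ℝ → ℝ) (x t : ℝ) : ℝ := 5/6 * u (x - t) + 1/3 * u x - 1/6 * u (x - 2*t)
noncomputable def auxM1 (u : ℝ → ℝ) (x t : ℝ) : ℝ := -(5/6) * deriv u (x - t) + 1/3 * deriv u (x - 2*t)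
noncomputable def auxM2 (u : ℝ → ℝ) (x t : ℝ) : ℝ :=
  5/6 * deriv (deriv u) (x - t) - 2/3 * deriv (deriv u) (x - 2*t)
noncomputable def auxM3 (u : ℝ → ℝ) (x t : ℝ) : ℝ :=
  -(5/6) * deriv (deriv (deriv u)) (x - t) + 4/3 * deriv (deriv (deriv u)) (x - 2*t)
noncomputable def auxG (u : ℝ → ℝ) (x t : ℝ) : ℝ :=
  (auxP u x t ^ 2 - auxM u x t ^ 2) / 2 - t * (u x * deriv u x)
noncomputable def auxG1 (u : ℝ → ℝ) (x t : ℝ) : ℝ :=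
  auxP u x t * auxP1 u x t - auxM u x t * auxM1 u x t - u x * deriv u x
noncomputable def auxG2 (u : ℝ → ℝ) (x t : ℝ) : ℝ :=
  auxP1 u x t ^ 2 + auxP u x t * auxP2 u x t - auxM1 u x t ^ 2 - auxM u x t * auxM2 u x t
noncomputable def auxG3 (u : ℝ → ℝ) (x t : ℝ) : ℝ :=
  3 * auxP1 u x t * auxP2 u x t + auxP u x t * auxP3 u x t
    - 3 * auxM1 u x t * auxM2 u x t - auxM u x t * auxM3 u x t

lemma shift_derivs (v : ℝ → ℝ) (hv : Differentiable ℝ v) (x t : ℝ) :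
    HasDerivAt (fun s => v (x + s)) (deriv v (x + t)) t ∧
    HasDerivAt (fun s => v (x - s)) (-deriv v (x - t)) t ∧
    HasDerivAt (fun s => v (x - 2*s)) (-2 * deriv v (x - 2*t)) t := by
  refine ⟨?_, ?_, ?_⟩
  · exact (hv (x + t)).hasDerivAt.comp_const_add x t
  · exact (hv (x - t)).hasDerivAt.comp_const_sub x t
  · have hin : HasDerivAt (fun s : ℝ => x - 2*s) (-2) t := by
      simpa using ((hasDerivAt_id t).const_mul 2).const_sub x
    have := (hv (x - 2*t)).hasDerivAt.comp t hin
    rw [mul_comm]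
    exact this

lemma auxLimit (u : ℝ → ℝ) (hu : ContDiff ℝ (⊤ : ℕ∞) u) (x : ℝ) :
    Tendsto (fun h : ℝ => auxG u x h / h ^ 3) (𝓝[>] (0 : ℝ))
      (𝓝 ((1 / 12) * (deriv u x * deriv (deriv u) x))) := by
  have hui : ContDiff ℝ ∞ u := hu.of_le (by simp)
  have hu0 : Differentiable ℝ u := (contDiff_infty_iff_deriv.mp hui).1
  have hui1 : ContDiff ℝ ∞ (deriv u) := (contDiff_infty_iff_deriv.mp hui).2
  have hu1 : Differentiable ℝ (deriv u) := (contDiff_infty_iff_deriv.mp hui1).1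
  have hui2 : ContDiff ℝ ∞ (deriv (deriv u)) := (contDiff_infty_iff_deriv.mp hui1).2
  have hu2 : Differentiable ℝ (deriv (deriv u)) := (contDiff_infty_iff_deriv.mp hui2).1
  have hui3 : ContDiff ℝ ∞ (deriv (deriv (deriv u))) := (contDiff_infty_iff_deriv.mp hui2).2
  -- HasDerivAt for P, P1, P2, M, M1, M2
  have hP : ∀ t : ℝ, HasDerivAt (auxP u x) (auxP1 u x t) t := by
    intro t
    obtain ⟨h1, h2, -⟩ := shift_derivs u hu0 x t
    have := ((h1.const_mul (1/3 : ℝ)).sub (h2.const_mul (1/6 : ℝ))).const_add (5/6 * u x)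
    convert this using 1 <;>
      first
        | (push_cast; ring1)
        | (simp only [auxP, auxP1, auxP2, auxP3, auxM, auxM1, auxM2, auxM3, auxG, auxG1,
             auxG2, auxG3, id_eq]; ring1)
        | (funext s; simp only [auxP, auxP1, auxP2, auxP3, auxM, auxM1, auxM2, auxM3, auxG,
             auxG1, auxG2, auxG3, id_eq, Pi.add_apply, Pi.sub_apply, Pi.mul_apply]; ring1)
        | rfl
  have hP1 : ∀ t : ℝ, HasDerivAt (auxP1 u x) (auxP2 u x t) t := by
    intro t
    obtain ⟨h1, h2, -⟩ := shift_derivs (deriv u) hu1 x t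
    have := (h1.const_mul (1/3 : ℝ)).add (h2.const_mul (1/6 : ℝ))
    convert this using 1 <;>
      first
        | (push_cast; ring1)
        | (simp only [auxP, auxP1, auxP2, auxP3, auxM, auxM1, auxM2, auxM3, auxG, auxG1,
             auxG2, auxG3, id_eq]; ring1)
        | (funext s; simp only [auxP, auxP1, auxP2, auxP3, auxM, auxM1, auxM2, auxM3, auxG,
             auxG1, auxG2, auxG3, id_eq, Pi.add_apply, Pi.sub_apply, Pi.mul_apply]; ring1)
        | rfl
  have hP2 : ∀ t : ℝ, HasDerivAt (auxP2 u x) (auxP3 u x t) t := by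
    intro t
    obtain ⟨h1, h2, -⟩ := shift_derivs (deriv (deriv u)) hu2 x t
    have := (h1.const_mul (1/3 : ℝ)).sub (h2.const_mul (1/6 : ℝ))
    convert this using 1 <;>
      first
        | (push_cast; ring1)
        | (simp only [auxP, auxP1, auxP2, auxP3, auxM, auxM1, auxM2, auxM3, auxG, auxG1,
             auxG2, auxG3, id_eq]; ring1)
        | (funext s; simp only [auxP, auxP1, auxP2, auxP3, auxM, auxM1, auxM2, auxM3, auxG,
             auxG1, auxG2, auxG3, id_eq, Pi.add_apply, Pi.sub_apply, Pi.mul_apply]; ring1)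
        | rfl
  have hM : ∀ t : ℝ, HasDerivAt (auxM u x) (auxM1 u x t) t := by
    intro t
    obtain ⟨-, h2, h3⟩ := shift_derivs u hu0 x t
    have := (((h2.const_mul (5/6 : ℝ)).add_const (1/3 * u x)).sub (h3.const_mul (1/6 : ℝ)))
    convert this using 1 <;>
      first
        | (push_cast; ring1)
        | (simp only [auxP, auxP1, auxP2, auxP3, auxM, auxM1, auxM2, auxM3, auxG, auxG1,
             auxG2, auxG3, id_eq]; ring1)
        | (funext s; simp only [auxP, auxP1, auxP2, auxP3, auxM, auxM1, auxM2, auxM3, auxG,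
             auxG1, auxG2, auxG3, id_eq, Pi.add_apply, Pi.sub_apply, Pi.mul_apply]; ring1)
        | rfl
  have hM1 : ∀ t : ℝ, HasDerivAt (auxM1 u x) (auxM2 u x t) t := by
    intro t
    obtain ⟨-, h2, h3⟩ := shift_derivs (deriv u) hu1 x t
    have := (h2.const_mul (-(5/6) : ℝ)).add (h3.const_mul (1/3 : ℝ))
    convert this using 1 <;>
      first
        | (push_cast; ring1)
        | (simp only [auxP, auxP1, auxP2, auxP3, auxM, auxM1, auxM2, auxM3, auxG, auxG1,
             auxG2, auxG3, id_eq]; ring1)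
        | (funext s; simp only [auxP, auxP1, auxP2, auxP3, auxM, auxM1, auxM2, auxM3, auxG,
             auxG1, auxG2, auxG3, id_eq, Pi.add_apply, Pi.sub_apply, Pi.mul_apply]; ring1)
        | rfl
  have hM2 : ∀ t : ℝ, HasDerivAt (auxM2 u x) (auxM3 u x t) t := by
    intro t
    obtain ⟨-, h2, h3⟩ := shift_derivs (deriv (deriv u)) hu2 x t
    have := (h2.const_mul (5/6 : ℝ)).sub (h3.const_mul (2/3 : ℝ))
    convert this using 1 <;>
      first
        | (push_cast; ring1)
        | (simp only [auxP, auxP1, auxP2, auxP3, auxM, auxM1, auxM2, auxM3, auxG, auxG1,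
             auxG2, auxG3, id_eq]; ring1)
        | (funext s; simp only [auxP, auxP1, auxP2, auxP3, auxM, auxM1, auxM2, auxM3, auxG,
             auxG1, auxG2, auxG3, id_eq, Pi.add_apply, Pi.sub_apply, Pi.mul_apply]; ring1)
        | rfl
  -- HasDerivAt for G, G1, G2
  have hG : ∀ t : ℝ, HasDerivAt (auxG u x) (auxG1 u x t) t := by
    intro t
    have := ((((hP t).mul (hP t)).sub ((hM t).mul (hM t))).div_const 2).sub
      ((hasDerivAt_id t).mul_const (u x * deriv u x))
    convert this using 1 <;>
      first
        | (push_cast; ring1)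
        | (simp only [auxP, auxP1, auxP2, auxP3, auxM, auxM1, auxM2, auxM3, auxG, auxG1,
             auxG2, auxG3, id_eq]; ring1)
        | (funext s; simp only [auxP, auxP1, auxP2, auxP3, auxM, auxM1, auxM2, auxM3, auxG,
             auxG1, auxG2, auxG3, id_eq, Pi.add_apply, Pi.sub_apply, Pi.mul_apply]; ring1)
        | rfl
  have hG1 : ∀ t : ℝ, HasDerivAt (auxG1 u x) (auxG2 u x t) t := by
    intro t
    have := (((hP t).mul (hP1 t)).sub ((hM t).mul (hM1 t))).sub_const (u x * deriv u x)
    convert this using 1 <;>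
      first
        | (push_cast; ring1)
        | (simp only [auxP, auxP1, auxP2, auxP3, auxM, auxM1, auxM2, auxM3, auxG, auxG1,
             auxG2, auxG3, id_eq]; ring1)
        | (funext s; simp only [auxP, auxP1, auxP2, auxP3, auxM, auxM1, auxM2, auxM3, auxG,
             auxG1, auxG2, auxG3, id_eq, Pi.add_apply, Pi.sub_apply, Pi.mul_apply]; ring1)
        | rfl
  have hG2 : ∀ t : ℝ, HasDerivAt (auxG2 u x) (auxG3 u x t) t := by
    intro t
    have := ((((hP1 t).mul (hP1 t)).add ((hP t).mul (hP2 t))).sub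
      ((hM1 t).mul (hM1 t))).sub ((hM t).mul (hM2 t))
    convert this using 1 <;>
      first
        | (push_cast; ring1)
        | (simp only [auxP, auxP1, auxP2, auxP3, auxM, auxM1, auxM2, auxM3, auxG, auxG1,
             auxG2, auxG3, id_eq]; ring1)
        | (funext s; simp only [auxP, auxP1, auxP2, auxP3, auxM, auxM1, auxM2, auxM3, auxG,
             auxG1, auxG2, auxG3, id_eq, Pi.add_apply, Pi.sub_apply, Pi.mul_apply]; ring1)
        | rfl
  -- values at 0
  have hG0 : auxG u x 0 = 0 := by
    simp only [auxG, auxP, auxM, add_zero, sub_zero, mul_zero, zero_mul]; ring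
  have hG10 : auxG1 u x 0 = 0 := by
    simp only [auxG1, auxP, auxP1, auxM, auxM1, add_zero, sub_zero, mul_zero]; ring
  have hG20 : auxG2 u x 0 = 0 := by
    simp only [auxG2, auxP, auxP1, auxP2, auxM, auxM1, auxM2, add_zero, sub_zero, mul_zero]; ring
  have hG30 : auxG3 u x 0 / 6 = (1 / 12) * (deriv u x * deriv (deriv u) x) := by
    simp only [auxG3, auxP, auxP1, auxP2, auxP3, auxM, auxM1, auxM2, auxM3, add_zero,
      sub_zero, mul_zero]
    ring
  -- continuity of auxG3
  have hc1 : Continuous (deriv u) := hui1.continuous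
  have hc2 : Continuous (deriv (deriv u)) := hui2.continuous
  have hc3 : Continuous (deriv (deriv (deriv u))) := hui3.continuous
  have hc0 : Continuous u := hui.continuous
  have hcG3 : Continuous (auxG3 u x) := by
    unfold auxG3 auxP auxP1 auxP2 auxP3 auxM auxM1 auxM2 auxM3
    fun_prop
  -- step 1
  have L := (1 / 12) * (deriv u x * deriv (deriv u) x)
  have step1 : Tendsto (fun h : ℝ => auxG2 u x h / (6 * h)) (𝓝[>] (0:ℝ))
      (𝓝 ((1 / 12) * (deriv u x * deriv (deriv u) x))) := by
    apply HasDerivAt.lhopital_zero_nhdsGT (f' := auxG3 u x) (g' := fun _ => (6:ℝ))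
    · exact Eventually.of_forall hG2
    · exact Eventually.of_forall fun t => by
        simpa using (hasDerivAt_id t).const_mul (6:ℝ)
    · exact Eventually.of_forall fun _ => by norm_num
    · have : Tendsto (auxG2 u x) (𝓝 0) (𝓝 (auxG2 u x 0)) :=
        (hG2 0).continuousAt.tendsto
      rw [hG20] at this
      exact this.mono_left nhdsWithin_le_nhds
    · have : Tendsto (fun h : ℝ => 6 * h) (𝓝 0) (𝓝 (6 * 0)) :=
        (continuous_const.mul continuous_id).tendsto 0
      simpa using this.mono_left nhdsWithin_le_nhds
    · have : Tendsto (fun h : ℝ => auxG3 u x h / 6) (𝓝 0) (𝓝 (auxG3 u x 0 / 6)) :=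
        ((hcG3.div_const 6).tendsto 0)
      rw [hG30] at this
      exact this.mono_left nhdsWithin_le_nhds
  -- step 2
  have step2 : Tendsto (fun h : ℝ => auxG1 u x h / (3 * h ^ 2)) (𝓝[>] (0:ℝ))
      (𝓝 ((1 / 12) * (deriv u x * deriv (deriv u) x))) := by
    apply HasDerivAt.lhopital_zero_nhdsGT (f' := auxG2 u x) (g' := fun h => 6 * h)
    · exact Eventually.of_forall hG1
    · refine Eventually.of_forall fun t => ?_
      have := (hasDerivAt_pow 2 t).const_mul (3:ℝ)
      convert this using 1 <;> (try push_cast) <;> (try norm_num) <;> (try ring) <;> (try rfl)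
    · filter_upwards [self_mem_nhdsWithin] with t ht
      have : (0:ℝ) < t := ht
      positivity
    · have : Tendsto (auxG1 u x) (𝓝 0) (𝓝 (auxG1 u x 0)) :=
        (hG1 0).continuousAt.tendsto
      rw [hG10] at this
      exact this.mono_left nhdsWithin_le_nhds
    · have : Tendsto (fun h : ℝ => 3 * h ^ 2) (𝓝 0) (𝓝 (3 * 0 ^ 2)) :=
        (continuous_const.mul (continuous_pow 2)).tendsto 0
      simpa using this.mono_left nhdsWithin_le_nhds
    · exact step1
  -- step 3
  apply HasDerivAt.lhopital_zero_nhdsGT (f' := auxG1 u x) (g' := fun h => 3 * h ^ 2)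
  · exact Eventually.of_forall hG
  · refine Eventually.of_forall fun t => ?_
    have := hasDerivAt_pow 3 t
    convert this using 1 <;> (try push_cast) <;> (try norm_num) <;> (try ring) <;> (try rfl)
  · filter_upwards [self_mem_nhdsWithin] with t ht
    have : (0:ℝ) < t := ht
    positivity
  · have : Tendsto (auxG u x) (𝓝 0) (𝓝 (auxG u x 0)) :=
      (hG 0).continuousAt.tendsto
    rw [hG0] at this
    exact this.mono_left nhdsWithin_le_nhds
  · have : Tendsto (fun h : ℝ => h ^ 3) (𝓝 0) (𝓝 ((0:ℝ) ^ 3)) :=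
      (continuous_pow 3).tendsto 0
    simpa using this.mono_left nhdsWithin_le_nhds
  · exact step2


/-- For the Burgers flux `f(v) = v²/2`, `κ = 1/3`, smooth `u` with `u(x) > 0` and
`u′(x) u″(x) ≠ 0`, we have `Res(h)/h² → (1/12) u′(x) u″(x) ≠ 0` as `h → 0⁺`; in
particular `Res(h)` is not `o(h²)`, so UMUSCL is at most second-order accurate at `x`
for the nonlinear Burgers equation. -/
theorem umuscl_burgers_second_order_at_best
    (u : ℝ → ℝ) (hu : ContDiff ℝ (⊤ : ℕ∞) u) (x : ℝ) (hx : 0 < u x)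
    (hne : deriv u x * deriv (deriv u) x ≠ 0)
    (f : ℝ → ℝ) (hf : ∀ v : ℝ, f v = v ^ 2 / 2) :
    Tendsto (fun h : ℝ => umusclRes f (1 / 3) u x h / h ^ 2) (𝓝[>] (0 : ℝ))
        (𝓝 ((1 / 12) * (deriv u x * deriv (deriv u) x))) ∧
      (1 / 12) * (deriv u x * deriv (deriv u) x) ≠ 0 ∧
      ¬ ((fun h : ℝ => umusclRes f (1 / 3) u x h) =o[𝓝[>] (0 : ℝ)] fun h : ℝ => h ^ 2) := by
  have hdf : ∀ v : ℝ, deriv f v = v := by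
    intro v
    rw [funext hf]
    have h := (hasDerivAt_pow 2 v).div_const 2
    norm_num at h
    exact h.deriv
  have hL : (1 / 12 : ℝ) * (deriv u x * deriv (deriv u) x) ≠ 0 := by
    intro h
    exact hne ((mul_eq_zero.mp h).resolve_left (by norm_num))
  have hcu : Continuous u := hu.continuous
  have flux_eq : ∀ a b : ℝ, 0 < (a + b) / 2 → numFlux f a b = a ^ 2 / 2 := by
    intro a b hab
    unfold numFlux
    rw [hdf, abs_of_pos hab, hf a, hf b]
    ring
  have tmid : ∀ g : ℝ → ℝ, Continuous g → g 0 = u x →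
      ∀ᶠ h in 𝓝[>] (0:ℝ), 0 < g h := by
    intro g hg hg0
    have h1 : Tendsto g (𝓝[>] (0:ℝ)) (𝓝 (u x)) := by
      have h2 := hg.tendsto 0
      rw [hg0] at h2
      exact h2.mono_left nhdsWithin_le_nhds
    exact h1.eventually (eventually_gt_nhds hx)
  have hposP : ∀ᶠ h in 𝓝[>] (0:ℝ),
      0 < (uLp (1/3) u x h + uRp (1/3) u x h) / 2 := by
    apply tmid
    · unfold uLp uRp; fun_prop
    · show (uLp (1/3) u x 0 + uRp (1/3) u x 0) / 2 = u x
      simp only [uLp, uRp, add_zero, mul_zero, sub_zero]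
      ring
  have hposM : ∀ᶠ h in 𝓝[>] (0:ℝ),
      0 < (uLm (1/3) u x h + uRm (1/3) u x h) / 2 := by
    apply tmid
    · unfold uLm uRm; fun_prop
    · show (uLm (1/3) u x 0 + uRm (1/3) u x 0) / 2 = u x
      simp only [uLm, uRm, add_zero, mul_zero, sub_zero]
      ring
  have hev : (fun h : ℝ => auxG u x h / h ^ 3) =ᶠ[𝓝[>] (0:ℝ)]
      (fun h : ℝ => umusclRes f (1/3) u x h / h ^ 2) := by
    filter_upwards [hposP, hposM, self_mem_nhdsWithin] with h hp hm hh
    have hh' : (0:ℝ) < h := hh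
    unfold umusclRes
    rw [flux_eq _ _ hp, flux_eq _ _ hm, hdf]
    have e1 : uLp (1/3) u x h = auxP u x h := by unfold uLp auxP; ring
    have e2 : uLm (1/3) u x h = auxM u x h := by unfold uLm auxM; ring
    rw [e1, e2]
    unfold auxG
    field_simp
  have hT : Tendsto (fun h : ℝ => umusclRes f (1 / 3) u x h / h ^ 2) (𝓝[>] (0 : ℝ))
      (𝓝 ((1 / 12) * (deriv u x * deriv (deriv u) x))) :=
    Filter.Tendsto.congr' hev (auxLimit u hu x)
  refine ⟨hT, hL, ?_⟩
  intro hcon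
  exact hL (tendsto_nhds_unique hT hcon.tendsto_div_nhds_zero)
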